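/- Define g : ℝ → ℝ by g(x) = Σ_{k=1}^∞ 2π·e^{−2k²π²}·cos(2kπx) (the termwise derivative of the Fourier series h(x) = 1/2 − (1/π)·Σ_{k=1}^∞ (1/k)·e^{−2k²π²}·sin(2kπx) of the sawtooth wave; the series converges absolutely). There exists a constant C > 0 such that for every y ∈ [0,1) with |y − 1/4| ≥ 1/50 and |y − 3/4| ≥ 1/50, and every x ∈ [y − 1/100, y + 1/100]: C ≤ |g(x)| and |g(x)| ≤ 1. -/

import Mathlib

open Real

/-- The termwise derivative of the Fourier series of the sawtooth wave:
`g(x) = Σ_{k=1}^∞ 2π·e^{−2k²π²}·cos(2kπx)` (the series converges absolutely). -/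
noncomputable def sawtoothDeriv (x : ℝ) : ℝ :=
  ∑' k : ℕ, 2 * π * Real.exp (-2 * ((k : ℝ) + 1) ^ 2 * π ^ 2) *
    Real.cos (2 * ((k : ℝ) + 1) * π * x)

/-!
With the nome `q = e^{-2π²} ≤ 1/100`, the `k`-th term of the series is at most `2π q^{k+1}`
in absolute value because `(k+1)² ≥ k+1`. Hence `|g| ≤ 2πq/(1-q) ≤ 1`, and `g(x)` differs from
its first term `2πq cos(2πx)` by at most `2πq²/(1-q)`. The conditions on `y` keep `x` within
`6/25` of a multiple of `1/2`, where Jordan's inequality gives `|cos(2πx)| ≥ 1/25`; so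
`|g(x)| ≥ 2πq/25 - 2πq²/(1-q) ≥ 2πq/50`.
-/

noncomputable def sawtoothNome : ℝ := exp (-(2 * π ^ 2))

noncomputable def sawtoothDerivTerm (x : ℝ) (k : ℕ) : ℝ :=
  2 * π * exp (-2 * ((k : ℝ) + 1) ^ 2 * π ^ 2) * cos (2 * ((k : ℝ) + 1) * π * x)

theorem sawtoothDeriv_eq_tsum (x : ℝ) : sawtoothDeriv x = ∑' k, sawtoothDerivTerm x k := rfl

theorem sawtoothDerivTerm_zero (x : ℝ) :
    sawtoothDerivTerm x 0 = 2 * π * sawtoothNome * cos (2 * π * x) := by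
  simp [sawtoothDerivTerm, sawtoothNome]

theorem sawtoothNome_pos : 0 < sawtoothNome := exp_pos _

theorem sawtoothNome_le : sawtoothNome ≤ 1 / 100 := by
  have h : (100 : ℝ) ≤ exp (2 * π ^ 2) :=
    calc (100 : ℝ) ≤ (π ^ 2 + 1) ^ 2 := by nlinarith [pi_gt_three, sq_nonneg (π - 3)]
      _ ≤ exp (π ^ 2) ^ 2 := by gcongr; exact add_one_le_exp _
      _ = exp (2 * π ^ 2) := by rw [← exp_nat_mul]; norm_num
  rw [sawtoothNome, exp_neg, one_div]
  exact inv_anti₀ (by norm_num) h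

theorem sawtoothNome_lt_one : sawtoothNome < 1 := sawtoothNome_le.trans_lt (by norm_num)

theorem abs_sawtoothDerivTerm_le (x : ℝ) (k : ℕ) :
    |sawtoothDerivTerm x k| ≤ 2 * π * sawtoothNome * sawtoothNome ^ k := by
  have hexp : exp (-2 * ((k : ℝ) + 1) ^ 2 * π ^ 2) ≤ sawtoothNome ^ (k + 1) := by
    rw [sawtoothNome, ← exp_nat_mul, exp_le_exp]
    push_cast
    nlinarith [mul_nonneg (mul_nonneg k.cast_nonneg k.cast_add_one_pos.le) (sq_nonneg π)]
  rw [sawtoothDerivTerm, abs_mul, abs_of_pos (by positivity)]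
  calc _ ≤ 2 * π * exp (-2 * ((k : ℝ) + 1) ^ 2 * π ^ 2) * 1 := by gcongr; exact abs_cos_le_one _
    _ ≤ 2 * π * sawtoothNome ^ (k + 1) := by rw [mul_one]; gcongr
    _ = _ := by ring

theorem hasSum_geometric_sawtoothNome (c : ℝ) :
    HasSum (fun k : ℕ => c * sawtoothNome ^ k) (c / (1 - sawtoothNome)) :=
  (hasSum_geometric_of_lt_one sawtoothNome_pos.le sawtoothNome_lt_one).mul_left c

theorem summable_sawtoothDerivTerm (x : ℝ) : Summable (sawtoothDerivTerm x) :=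
  .of_norm_bounded (hasSum_geometric_sawtoothNome _).summable (abs_sawtoothDerivTerm_le x)

theorem abs_sawtoothDeriv_le (x : ℝ) :
    |sawtoothDeriv x| ≤ 2 * π * sawtoothNome / (1 - sawtoothNome) :=
  tsum_of_norm_bounded (f := sawtoothDerivTerm x) (hasSum_geometric_sawtoothNome _)
    (abs_sawtoothDerivTerm_le x)

theorem abs_sawtoothDeriv_sub_le (x : ℝ) :
    |sawtoothDeriv x - 2 * π * sawtoothNome * cos (2 * π * x)| ≤
      2 * π * sawtoothNome ^ 2 / (1 - sawtoothNome) := by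
  rw [sawtoothDeriv_eq_tsum, (summable_sawtoothDerivTerm x).tsum_eq_zero_add,
    sawtoothDerivTerm_zero, add_sub_cancel_left]
  exact tsum_of_norm_bounded (f := fun k => sawtoothDerivTerm x (k + 1))
    (hasSum_geometric_sawtoothNome _) fun k =>
      (abs_sawtoothDerivTerm_le x (k + 1)).trans_eq (by ring)

theorem one_sub_four_mul_le_abs_cos_two_pi_mul {x : ℝ} (n : ℤ) (h : |x - n / 2| ≤ 1 / 4) :
    1 - 4 * |x - n / 2| ≤ |cos (2 * π * x)| := by
  set t := x - n / 2
  have hcos : |cos (2 * π * x)| = |cos (2 * π * |t|)| := by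
    have : 2 * π * x = 2 * π * t + n * π := by simp only [t]; ring
    rw [this, cos_add_int_mul_pi, abs_mul, abs_neg_one_zpow, one_mul,
      ← cos_abs (2 * π * t), abs_mul, abs_of_pos two_pi_pos]
  rw [hcos]
  calc 1 - 4 * |t| = 1 - 2 / π * (2 * π * |t|) := by field_simp; ring
    _ ≤ cos (2 * π * |t|) := one_sub_mul_le_cos (by positivity) (by nlinarith [pi_pos])
    _ ≤ _ := le_abs_self _

theorem exists_abs_sub_half_int_le {x y : ℝ} (hy : y ∈ Set.Ico (0 : ℝ) 1)
    (h₁ : 1 / 50 ≤ |y - 1 / 4|) (h₃ : 1 / 50 ≤ |y - 3 / 4|)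
    (hx : x ∈ Set.Icc (y - 1 / 100) (y + 1 / 100)) : ∃ n : ℤ, |x - n / 2| ≤ 6 / 25 := by
  obtain ⟨hy0, hy1⟩ := hy
  obtain ⟨hxl, hxu⟩ := hx
  rcases le_abs'.mp h₁ with h₁ | h₁
  · exact ⟨0, abs_le.mpr ⟨by push_cast; linarith, by push_cast; linarith⟩⟩
  rcases le_abs'.mp h₃ with h₃ | h₃
  · exact ⟨1, abs_le.mpr ⟨by push_cast; linarith, by push_cast; linarith⟩⟩
  · exact ⟨2, abs_le.mpr ⟨by push_cast; linarith, by push_cast; linarith⟩⟩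

/-- There is a constant `C > 0` such that for every `y ∈ [0,1)` with `|y − 1/4| ≥ 1/50`
and `|y − 3/4| ≥ 1/50`, and every `x ∈ [y − 1/100, y + 1/100]`,
`C ≤ |g(x)|` and `|g(x)| ≤ 1`, where `g` is the termwise derivative of the sawtooth
Fourier series. -/
theorem sawtoothDeriv_bounds :
    ∃ C : ℝ, 0 < C ∧
      ∀ y ∈ Set.Ico (0 : ℝ) 1, (1 / 50 : ℝ) ≤ |y - 1 / 4| → (1 / 50 : ℝ) ≤ |y - 3 / 4| →
        ∀ x ∈ Set.Icc (y - 1 / 100) (y + 1 / 100),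
          C ≤ |sawtoothDeriv x| ∧ |sawtoothDeriv x| ≤ 1 := by
  set q := sawtoothNome
  have hq0 : 0 < q := sawtoothNome_pos
  have hq : q ≤ 1 / 100 := sawtoothNome_le
  refine ⟨2 * π * q / 50, by positivity, fun y hy h₁ h₃ x hx => ⟨?_, ?_⟩⟩
  · obtain ⟨n, hn⟩ := exists_abs_sub_half_int_le hy h₁ h₃ hx
    have hcos : 1 / 25 ≤ |cos (2 * π * x)| := by
      linarith [one_sub_four_mul_le_abs_cos_two_pi_mul n (hn.trans (by norm_num))]
    have hmain : 2 * π * q / 25 ≤ |2 * π * q * cos (2 * π * x)| := by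
      rw [abs_mul, abs_of_pos (by positivity)]
      nlinarith [mul_le_mul_of_nonneg_left hcos (by positivity : (0 : ℝ) ≤ 2 * π * q)]
    have htail : 2 * π * q ^ 2 / (1 - q) ≤ 2 * π * q / 50 := by
      rw [div_le_iff₀ (by linarith)]
      nlinarith [mul_pos two_pi_pos hq0]
    linarith [abs_sub_abs_le_abs_sub (2 * π * q * cos (2 * π * x)) (sawtoothDeriv x),
      abs_sub_comm (sawtoothDeriv x) (2 * π * q * cos (2 * π * x)), abs_sawtoothDeriv_sub_le x]
  · calc |sawtoothDeriv x| ≤ 2 * π * q / (1 - q) := abs_sawtoothDeriv_le x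
      _ ≤ 1 := by
        rw [div_le_one₀ (by linarith)]
        nlinarith [pi_lt_d2]
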